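/- Assume r ≥ 10 and set s = √(r−1) − 3 (so s ≥ 0 and ⟨K − sL, K − sL⟩ = −1). Then every (−1)-class e lies in the cone Q̄ + ℝ_{≥0}·(K − sL), i.e., there exist q ∈ Q̄ and t ≥ 0 with e = q + t·(K − sL). -/

import Mathlib

open scoped BigOperators

noncomputable def mform (r : ℕ) (u v : Fin (r + 1) → ℝ) : ℝ :=
  u 0 * v 0 - ∑ i : Fin r, u i.succ * v i.succ

def lclass (r : ℕ) : Fin (r + 1) → ℝ := fun i => if i = 0 then 1 else 0

def kclass (r : ℕ) : Fin (r + 1) → ℝ := fun i => if i = 0 then -3 else 1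

def Qset (r : ℕ) : Set (Fin (r + 1) → ℝ) :=
  {α | 0 ≤ mform r α α ∧ 0 < mform r α (lclass r)}

def Qbar (r : ℕ) : Set (Fin (r + 1) → ℝ) :=
  {α | 0 ≤ mform r α α ∧ 0 ≤ mform r α (lclass r)}

/-!
Put `M = K - sL`. For `r ≥ 10` one has `s ≥ 0` and `⟨M, M⟩ = (s + 3)² - r = -1`. Given a
`(-1)`-class `e`, let `t = -⟨e, M⟩ = 1 + s⟨e, L⟩ ≥ 1` and `q = e - tM`, the projection of `e`
onto `M^⊥`. Then `⟨q, q⟩ = ⟨e, e⟩ + t² = t² - 1 ≥ 0` and `⟨q, L⟩ = ⟨e, L⟩ + t(s + 3) ≥ 0`,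
so `q ∈ Q̄` and `e = q + tM`.
-/

section Bilinear

variable (r : ℕ)

lemma mform_comm (u v : Fin (r + 1) → ℝ) : mform r u v = mform r v u := by
  simp [mform, mul_comm]

lemma mform_sub_left (u w v : Fin (r + 1) → ℝ) :
    mform r (u - w) v = mform r u v - mform r w v := by
  simp only [mform, Pi.sub_apply, sub_mul, Finset.sum_sub_distrib]
  ring

lemma mform_smul_left (c : ℝ) (u v : Fin (r + 1) → ℝ) :
    mform r (c • u) v = c * mform r u v := by
  simp only [mform, Pi.smul_apply, smul_eq_mul, mul_assoc, ← Finset.mul_sum]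
  ring

lemma mform_sub_right (u v w : Fin (r + 1) → ℝ) :
    mform r u (v - w) = mform r u v - mform r u w := by
  rw [mform_comm, mform_sub_left, mform_comm r v u, mform_comm r w u]

lemma mform_smul_right (c : ℝ) (u v : Fin (r + 1) → ℝ) :
    mform r u (c • v) = c * mform r u v := by
  rw [mform_comm, mform_smul_left, mform_comm]

lemma mform_sub_smul_self (t : ℝ) (u v : Fin (r + 1) → ℝ) :
    mform r (u - t • v) (u - t • v) =
      mform r u u - 2 * t * mform r u v + t ^ 2 * mform r v v := by
  rw [mform_sub_left, mform_sub_right, mform_sub_right, mform_smul_left, mform_smul_left,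
    mform_smul_right, mform_smul_right, mform_comm r v u]
  ring

end Bilinear

section Classes

variable (r : ℕ)

lemma mform_lclass_lclass : mform r (lclass r) (lclass r) = 1 := by
  simp [mform, lclass, Fin.succ_ne_zero]

lemma mform_kclass_lclass : mform r (kclass r) (lclass r) = -3 := by
  simp [mform, kclass, lclass, Fin.succ_ne_zero]

lemma mform_kclass_kclass : mform r (kclass r) (kclass r) = 9 - r := by
  simp [mform, kclass, Fin.succ_ne_zero]
  ring

variable (s : ℝ)

lemma mform_kclass_sub_smul_lclass_self :
    mform r (kclass r - s • lclass r) (kclass r - s • lclass r) = (s + 3) ^ 2 - r := by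
  rw [mform_sub_smul_self, mform_kclass_kclass, mform_kclass_lclass, mform_lclass_lclass]
  ring

lemma mform_kclass_sub_smul_lclass_lclass :
    mform r (kclass r - s • lclass r) (lclass r) = -(s + 3) := by
  rw [mform_sub_left, mform_smul_left, mform_kclass_lclass, mform_lclass_lclass]
  ring

lemma mform_kclass_sub_smul_lclass_right (e : Fin (r + 1) → ℝ) :
    mform r e (kclass r - s • lclass r) = mform r e (kclass r) - s * mform r e (lclass r) := by
  rw [mform_sub_right, mform_smul_right]

end Classes

lemma sub_smul_kclass_sub_smul_lclass_mem_Qbar (r : ℕ) (s : ℝ) (hs : 0 ≤ s)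
    (hsr : (s + 3) ^ 2 = r - 1) (e : Fin (r + 1) → ℝ)
    (hee : mform r e e = -1) (heK : mform r e (kclass r) = -1)
    (heL : 0 ≤ mform r e (lclass r)) :
    e - (1 + s * mform r e (lclass r)) • (kclass r - s • lclass r) ∈ Qbar r := by
  set d := mform r e (lclass r)
  have ht : 1 ≤ 1 + s * d := le_add_of_nonneg_right (mul_nonneg hs heL)
  constructor
  · rw [mform_sub_smul_self, mform_kclass_sub_smul_lclass_self,
      mform_kclass_sub_smul_lclass_right, hee, heK]
    nlinarith
  · rw [mform_sub_left, mform_smul_left, mform_kclass_sub_smul_lclass_lclass]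
    nlinarith

theorem stmt8 (r : ℕ) (hr : 10 ≤ r) (e : Fin (r + 1) → ℝ)
    (hee : mform r e e = -1) (heK : mform r e (kclass r) = -1)
    (heL : 0 ≤ mform r e (lclass r)) :
    ∃ q ∈ Qbar r, ∃ t : ℝ, 0 ≤ t ∧
      e = q + t • (kclass r - (Real.sqrt ((r : ℝ) - 1) - 3) • lclass r) := by
  set s := Real.sqrt ((r : ℝ) - 1) - 3
  have hr' : (9 : ℝ) ≤ r - 1 := by
    have : (10 : ℝ) ≤ r := by exact_mod_cast hr
    linarith
  have hsr : (s + 3) ^ 2 = r - 1 := by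
    rw [sub_add_cancel, Real.sq_sqrt (by linarith)]
  have hs : 0 ≤ s := by
    have : Real.sqrt 9 ≤ Real.sqrt ((r : ℝ) - 1) := Real.sqrt_le_sqrt hr'
    rw [show (9 : ℝ) = 3 ^ 2 by norm_num, Real.sqrt_sq (by norm_num)] at this
    linarith
  refine ⟨_, sub_smul_kclass_sub_smul_lclass_mem_Qbar r s hs hsr e hee heK heL,
    1 + s * mform r e (lclass r), add_nonneg zero_le_one (mul_nonneg hs heL), by abel⟩
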